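/- arXiv:1908.11681 — 4 statements merged into one kernel-verified Lean document; each statement's English description precedes it below -/
import Mathlib

section
/- For n ≥ 2, the norm ν_n(x) = max_{1≤k≤n} |x_k| + Σ_{i<j} |x_i − x_j| is not monotonic on the nonnegative orthant: there exist vectors x ≤ y coordinatewise in ℝ≥0^n with ν_n(x) > ν_n(y). Specifically, ν_n(0,2,...,2) = 2 + 2(n−1) > 2 + (n−1) = ν_n(1,2,...,2). -/
open Finset in
lemma pair_card {n : ℕ} (hn : 2 ≤ n) :
    ((Finset.univ.filter (fun p : Fin n × Fin n => p.1 < p.2)).filter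
      (fun p => (p.1 : ℕ) = 0)).card = n - 1 := by
  have h : ((Finset.univ.filter (fun p : Fin n × Fin n => p.1 < p.2)).filter
      (fun p => (p.1 : ℕ) = 0))
      = (Finset.univ.filter (fun j : Fin n => 0 < (j : ℕ))).image
        (fun j => ((⟨0, by omega⟩ : Fin n), j)) := by
    ext p
    simp only [mem_filter, mem_univ, true_and, mem_image]
    constructor
    · rintro ⟨hlt, h0⟩
      refine ⟨p.2, ?_, ?_⟩
      · have := Fin.lt_iff_val_lt_val.mp hlt; omega
      · have : p.1 = ⟨0, by omega⟩ := Fin.ext h0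
        rw [← this]
    · rintro ⟨j, hj, rfl⟩
      exact ⟨Fin.lt_iff_val_lt_val.mpr (by simpa using hj), rfl⟩
  rw [h, Finset.card_image_of_injective _ (fun a b hab => (Prod.mk.injEq _ _ _ _ ▸ hab).2)]
  have : (Finset.univ.filter (fun j : Fin n => 0 < (j : ℕ)))
      = Finset.univ \ {(⟨0, by omega⟩ : Fin n)} := by
    ext j; simp [Fin.ext_iff]; omega
  rw [this, Finset.card_sdiff_of_subset (by simp)]
  simp

open Finset in
lemma pair_sum {n : ℕ} (hn : 2 ≤ n) (a : ℝ) (ha : a ≤ 2) :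
    ∑ p ∈ Finset.univ.filter (fun p : Fin n × Fin n => p.1 < p.2),
      |(if (p.1 : ℕ) = 0 then a else 2) - (if (p.2 : ℕ) = 0 then a else 2)|
      = (2 - a) * (n - 1) := by
  have key : ∀ p ∈ Finset.univ.filter (fun p : Fin n × Fin n => p.1 < p.2),
      |(if (p.1 : ℕ) = 0 then a else 2) - (if (p.2 : ℕ) = 0 then a else 2)|
      = if (p.1 : ℕ) = 0 then (2 - a) else 0 := by
    rintro ⟨i, j⟩ hp
    simp only [mem_filter, mem_univ, true_and] at hp
    have hij : (i : ℕ) < (j : ℕ) := hp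
    by_cases hi : (i : ℕ) = 0
    · have hj : (j : ℕ) ≠ 0 := by omega
      simp only [if_pos hi, if_neg hj]
      rw [abs_sub_comm, abs_of_nonneg (by linarith)]
    · have hj : (j : ℕ) ≠ 0 := by omega
      simp [hi, hj]
  rw [Finset.sum_congr rfl key, ← Finset.sum_filter]
  simp only [Finset.sum_const, nsmul_eq_mul]
  rw [pair_card hn]
  push_cast [Nat.cast_sub (by omega : 1 ≤ n)]
  ring

lemma sup_two {n : ℕ} (hn : 2 ≤ n) (a : ℝ) (h0 : 0 ≤ a) (h2 : a ≤ 2) :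
    (⨆ k : Fin n, |(if (k : ℕ) = 0 then a else 2 : ℝ)|) = 2 := by
  haveI : Nonempty (Fin n) := ⟨⟨0, by omega⟩⟩
  apply le_antisymm
  · apply ciSup_le
    intro k
    by_cases hk : (k : ℕ) = 0 <;> simp [hk, abs_of_nonneg, h0, h2]
  · have h1 : (1 : ℕ) < n := by omega
    have := le_ciSup (f := fun k : Fin n => |(if (k : ℕ) = 0 then a else 2 : ℝ)|)
      (Set.Finite.bddAbove (Set.finite_range _)) ⟨1, h1⟩
    simpa using this

theorem nu_n_not_monotonic {n : ℕ} (hn : 2 ≤ n) (ν : (Fin n → ℝ) → ℝ)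
    (hν : ∀ x : Fin n → ℝ,
      ν x = (⨆ k, |x k|) +
        ∑ p ∈ Finset.univ.filter (fun p : Fin n × Fin n => p.1 < p.2),
          |x p.1 - x p.2|) :
    ∃ x y : Fin n → ℝ, (∀ i, 0 ≤ x i) ∧ (∀ i, x i ≤ y i) ∧ ν y < ν x ∧
      x = (fun i : Fin n => if (i : ℕ) = 0 then (0 : ℝ) else 2) ∧
      y = (fun i : Fin n => if (i : ℕ) = 0 then (1 : ℝ) else 2) ∧
      ν x = 2 + 2 * (n - 1) ∧ ν y = 2 + (n - 1) := by
  refine ⟨(fun i : Fin n => if (i : ℕ) = 0 then (0 : ℝ) else 2),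
    (fun i : Fin n => if (i : ℕ) = 0 then (1 : ℝ) else 2), ?_, ?_, ?_, rfl, rfl, ?_, ?_⟩
  · intro i; by_cases hi : (i : ℕ) = 0 <;> simp [hi]
  · intro i; by_cases hi : (i : ℕ) = 0 <;> simp [hi]
  · rw [hν, hν, sup_two hn _ (by norm_num) (by norm_num),
      pair_sum hn _ (by norm_num), sup_two hn _ (by norm_num) (by norm_num),
      pair_sum hn _ (by norm_num)]
    have : (2 : ℝ) ≤ (n : ℝ) := by exact_mod_cast hn
    linarith
  all_goals rw [hν, sup_two hn _ (by norm_num) (by norm_num),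
      pair_sum hn _ (by norm_num)]; ring
end

section
/- Let f, g be real-valued functions on a Cartesian product X whose difference sets are finite. Then there exists α₀ ∈ (0, ∞] such that for every real α with |α| < α₀, the function f + α·g refines f. -/
def AdjacentProd {I : Type*} {X : I → Type*} (x x' : ∀ i, X i) : Prop :=
  ∃ i, x i ≠ x' i ∧ ∀ j, j ≠ i → x j = x' j

def Refines {I : Type*} {X : I → Type*} {T : Type*} [LinearOrder T]
    (f' f : (∀ i, X i) → T) : Prop :=
  ∀ x x', AdjacentProd x x' → f x < f x' → f' x < f' x'

def DiffSet {I : Type*} {X : I → Type*} (h : (∀ i, X i) → ℝ) : Set ℝ :=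
  {t | ∃ x x', AdjacentProd x x' ∧ t = h x' - h x}

theorem exists_threshold_for_refinement {I : Type*} {X : I → Type*}
    (f g : (∀ i, X i) → ℝ)
    (hf : (DiffSet f).Finite) (hg : (DiffSet g).Finite) :
    ∃ α₀ : EReal, 0 < α₀ ∧
      ∀ α : ℝ, ((|α| : ℝ) : EReal) < α₀ →
        Refines (fun x => f x + α * g x) f := by
  classical
  set s : Finset ℝ := hf.toFinset.filter (fun a => 0 < a) with hs
  set t : Finset ℝ := hg.toFinset with ht
  by_cases hse : s.Nonempty
  · have hte : t.Nonempty := by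
      obtain ⟨a, ha⟩ := hse
      rw [hs, Finset.mem_filter, Set.Finite.mem_toFinset] at ha
      obtain ⟨x, x', hadj, _⟩ := ha.1
      exact ⟨g x' - g x, by rw [ht, Set.Finite.mem_toFinset]; exact ⟨x, x', hadj, rfl⟩⟩
    have hst : (s ×ˢ t).Nonempty := hse.product hte
    set c : ℝ := (s ×ˢ t).inf' hst (fun p => p.1 / (|p.2| + 1)) with hc
    have hcpos : 0 < c := by
      rw [hc, Finset.lt_inf'_iff]
      rintro ⟨a, b⟩ hab
      rw [Finset.mem_product] at hab
      have ha : 0 < a := by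
        have := hab.1; rw [hs, Finset.mem_filter] at this; exact this.2
      positivity
    refine ⟨(c : EReal), by exact_mod_cast hcpos, ?_⟩
    intro α hα x x' hadj hlt
    have hαc : |α| < c := by exact_mod_cast hα
    set a : ℝ := f x' - f x with ha
    set b : ℝ := g x' - g x with hb
    have has : a ∈ s := by
      rw [hs, Finset.mem_filter, Set.Finite.mem_toFinset]
      exact ⟨⟨x, x', hadj, rfl⟩, by linarith⟩
    have hbt : b ∈ t := by
      rw [ht, Set.Finite.mem_toFinset]; exact ⟨x, x', hadj, rfl⟩
    have hle : c ≤ a / (|b| + 1) :=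
      Finset.inf'_le (fun p => p.1 / (|p.2| + 1)) (Finset.mem_product.mpr (⟨has, hbt⟩ : a ∈ s ∧ b ∈ t) : (a, b) ∈ s ×ˢ t)
    have h1 : |α| < a / (|b| + 1) := lt_of_lt_of_le hαc hle
    have hb1 : (0:ℝ) < |b| + 1 := by positivity
    have h2 : |α| * (|b| + 1) < a := (lt_div_iff₀ hb1).mp h1
    have h3 : -(α * b) ≤ |α| * |b| := by
      calc -(α * b) ≤ |α * b| := neg_le_abs _
        _ = |α| * |b| := abs_mul α b
    have h4 : |α| * |b| ≤ |α| * (|b| + 1) := by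
      have := abs_nonneg α; nlinarith
    have h5 : -a < α * b := by linarith
    simp only
    rw [ha, hb] at h5
    linarith
  · refine ⟨⊤, by simp, ?_⟩
    intro α _ x x' hadj hlt
    exfalso
    apply hse
    refine ⟨f x' - f x, ?_⟩
    rw [hs, Finset.mem_filter, Set.Finite.mem_toFinset]
    exact ⟨⟨x, x', hadj, rfl⟩, by linarith⟩
end

section
/- There exists a weighted triangle on which the function π fails the triangle inequality: for the complete graph on three vertices u, v, w with edge weights w(uv) = 1/4, w(vw) = 1/4, w(uw) = 3/4, one has π(u,w) = 3/7 > 2/5 = π(u,v) + π(v,w), where π(x,y) = p/(p+1) with p the minimum product weight over shortest paths between x and y (single edges here). -/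
open Classical

/-- Product weight of a walk: the product of the weights of its edges. -/
def walkProdWeight {V : Type*} {G : SimpleGraph V} (w : Sym2 V → ℝ)
    {u v : V} (γ : G.Walk u v) : ℝ :=
  (γ.edges.map w).prod

/-- The proximity function π. -/
noncomputable def piFun {V : Type*} (G : SimpleGraph V) (w : Sym2 V → ℝ)
    (u v : V) : ℝ :=
  if u = v then 0
  else sInf {t | ∃ γ : G.Walk u v, γ.IsPath ∧ γ.length = G.dist u v ∧
    t = walkProdWeight w γ / (walkProdWeight w γ + 1)}

/-- The edge weights of the triangle: w(uv) = 1/4, w(vw) = 1/4, w(uw) = 3/4,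
where u = 0, v = 1, w = 2. -/
noncomputable def triWeight : Sym2 (Fin 3) → ℝ := fun e =>
  if e = s(0, 1) then 1/4 else if e = s(1, 2) then 1/4
  else if e = s(0, 2) then 3/4 else 0

section

variable {V : Type*} {G : SimpleGraph V} {u v : V}

theorem SimpleGraph.Walk.edges_eq_singleton_of_length_eq_one {γ : G.Walk u v}
    (h : γ.length = 1) : γ.edges = [s(u, v)] := by
  cases γ with
  | nil => simp at h
  | cons _ p =>
    cases p with
    | nil => rfl
    | cons => simp at h

theorem walkProdWeight_of_length_eq_one (w : Sym2 V → ℝ) {γ : G.Walk u v}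
    (h : γ.length = 1) : walkProdWeight w γ = w s(u, v) := by
  simp [walkProdWeight, γ.edges_eq_singleton_of_length_eq_one h]

/-- Between adjacent vertices the only shortest path is the edge itself. -/
theorem piFun_of_adj (w : Sym2 V → ℝ) (hadj : G.Adj u v) :
    piFun G w u v = w s(u, v) / (w s(u, v) + 1) := by
  have hpaths : {t | ∃ γ : G.Walk u v, γ.IsPath ∧ γ.length = G.dist u v ∧
      t = walkProdWeight w γ / (walkProdWeight w γ + 1)} =
      {w s(u, v) / (w s(u, v) + 1)} := by
    ext t
    simp only [Set.mem_ofPred_eq, Set.mem_singleton_iff,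
      SimpleGraph.dist_eq_one_iff_adj.mpr hadj]
    constructor
    · rintro ⟨γ, -, hlen, rfl⟩
      rw [walkProdWeight_of_length_eq_one w hlen]
    · rintro rfl
      exact ⟨hadj.toWalk, hadj.isPath_toWalk, hadj.length_toWalk,
        by rw [walkProdWeight_of_length_eq_one w hadj.length_toWalk]⟩
  rw [piFun, if_neg hadj.ne, hpaths, csInf_singleton]

end

theorem pi_fails_triangle_inequality :
    piFun (⊤ : SimpleGraph (Fin 3)) triWeight 0 2 = 3/7 ∧
    piFun (⊤ : SimpleGraph (Fin 3)) triWeight 0 1 +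
      piFun (⊤ : SimpleGraph (Fin 3)) triWeight 1 2 = 2/5 ∧
    piFun (⊤ : SimpleGraph (Fin 3)) triWeight 0 1 +
        piFun (⊤ : SimpleGraph (Fin 3)) triWeight 1 2 <
      piFun (⊤ : SimpleGraph (Fin 3)) triWeight 0 2 := by
  have h02 : piFun (⊤ : SimpleGraph (Fin 3)) triWeight 0 2 = 3/7 := by
    rw [piFun_of_adj triWeight (by decide)]
    norm_num [triWeight, Fin.ext_iff]
  have h01 : piFun (⊤ : SimpleGraph (Fin 3)) triWeight 0 1 = 1/5 := by
    rw [piFun_of_adj triWeight (by decide)]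
    norm_num [triWeight, Fin.ext_iff]
  have h12 : piFun (⊤ : SimpleGraph (Fin 3)) triWeight 1 2 = 1/5 := by
    rw [piFun_of_adj triWeight (by decide)]
    norm_num [triWeight, Fin.ext_iff]
  rw [h02, h01, h12]
  norm_num
end

section
/- Let G be a finite simple connected graph with a nonnegative edge weight function w. Define π(u,v) = 0 if u = v, and otherwise π(u,v) = min{p(γ)/(p(γ)+1) : γ a shortest path between u and v}, where p(γ) is the product of the edge weights along γ. Then d_w^π := d_s + π, where d_s is the shortest-path (graph) distance, is a metric on the vertex set of G. -/
open Classical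

def IsMetric {E : Type*} (d : E → E → ℝ) : Prop :=
  (∀ p q, 0 ≤ d p q) ∧ (∀ p q, d p q = 0 ↔ p = q) ∧ (∀ p q, d p q = d q p) ∧
  (∀ p q r, d p r ≤ d p q + d q r)

section Aux

variable {V : Type*} {G : SimpleGraph V} {w : Sym2 V → ℝ}

/-- The set whose infimum defines `piFun` (for distinct vertices). -/
def piSet (G : SimpleGraph V) (w : Sym2 V → ℝ) (u v : V) : Set ℝ :=
  {t | ∃ γ : G.Walk u v, γ.IsPath ∧ γ.length = G.dist u v ∧
    t = walkProdWeight w γ / (walkProdWeight w γ + 1)}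

lemma prodWeight_nonneg (hw : ∀ e ∈ G.edgeSet, 0 ≤ w e) {u v : V}
    (γ : G.Walk u v) : 0 ≤ walkProdWeight w γ := by
  apply List.prod_nonneg
  intro x hx
  rcases List.mem_map.mp hx with ⟨e, he, rfl⟩
  exact hw e (γ.edges_subset_edgeSet he)

lemma mem_piSet_bounds (hw : ∀ e ∈ G.edgeSet, 0 ≤ w e) {u v : V} {t : ℝ}
    (ht : t ∈ piSet G w u v) : 0 ≤ t ∧ t < 1 := by
  rcases ht with ⟨γ, _, _, rfl⟩
  have hp := prodWeight_nonneg hw γ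
  constructor
  · exact div_nonneg hp (by linarith)
  · rw [div_lt_one (by linarith)]; linarith

lemma piSet_nonempty (hG : G.Connected) (u v : V) :
    (piSet G w u v).Nonempty := by
  obtain ⟨γ, hpath, hlen⟩ := hG.exists_path_of_dist u v
  exact ⟨_, γ, hpath, hlen, rfl⟩

lemma piSet_finite [Fintype V] (u v : V) : (piSet G w u v).Finite := by
  classical
  have : piSet G w u v ⊆
      (fun γ : {p : G.Walk u v | p.IsPath ∧ p.length = G.dist u v} =>
        walkProdWeight w γ.1 / (walkProdWeight w γ.1 + 1)) '' Set.univ := by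
    rintro t ⟨γ, h1, h2, rfl⟩
    exact ⟨⟨γ, h1, h2⟩, trivial, rfl⟩
  exact Set.Finite.subset (Set.toFinite _) this

lemma piSet_bddBelow (hw : ∀ e ∈ G.edgeSet, 0 ≤ w e) (u v : V) :
    BddBelow (piSet G w u v) :=
  ⟨0, fun t ht => (mem_piSet_bounds hw ht).1⟩

lemma piFun_eq (u v : V) :
    piFun G w u v = if u = v then 0 else sInf (piSet G w u v) := rfl

lemma piFun_nonneg (hG : G.Connected) (hw : ∀ e ∈ G.edgeSet, 0 ≤ w e)
    (u v : V) : 0 ≤ piFun G w u v := by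
  rw [piFun_eq]
  split
  · exact le_refl 0
  · exact le_csInf (piSet_nonempty hG u v)
      (fun t ht => (mem_piSet_bounds hw ht).1)

lemma piFun_lt_one [Fintype V] (hG : G.Connected) (hw : ∀ e ∈ G.edgeSet, 0 ≤ w e)
    {u v : V} (huv : u ≠ v) : piFun G w u v < 1 := by
  rw [piFun_eq, if_neg huv]
  obtain ⟨t, ht⟩ := piSet_nonempty (w := w) hG u v
  calc sInf (piSet G w u v) ≤ t := csInf_le (piSet_bddBelow hw u v) ht
    _ < 1 := (mem_piSet_bounds hw ht).2

lemma walkProdWeight_reverse {u v : V} (γ : G.Walk u v) :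
    walkProdWeight w γ.reverse = walkProdWeight w γ := by
  unfold walkProdWeight
  rw [SimpleGraph.Walk.edges_reverse, List.map_reverse, List.prod_reverse]

lemma piSet_comm (u v : V) : piSet G w u v = piSet G w v u := by
  ext t
  constructor
  · rintro ⟨γ, h1, h2, rfl⟩
    exact ⟨γ.reverse, h1.reverse, by
      rw [SimpleGraph.Walk.length_reverse, h2, SimpleGraph.dist_comm],
      by rw [walkProdWeight_reverse]⟩
  · rintro ⟨γ, h1, h2, rfl⟩
    exact ⟨γ.reverse, h1.reverse, by
      rw [SimpleGraph.Walk.length_reverse, h2, SimpleGraph.dist_comm],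
      by rw [walkProdWeight_reverse]⟩

lemma piFun_comm (u v : V) : piFun G w u v = piFun G w v u := by
  rw [piFun_eq, piFun_eq]
  by_cases h : u = v
  · subst h; simp
  · rw [if_neg h, if_neg (Ne.symm h), piSet_comm]

lemma walkProdWeight_append {u v x : V} (γ₁ : G.Walk u v) (γ₂ : G.Walk v x) :
    walkProdWeight w (γ₁.append γ₂) = walkProdWeight w γ₁ * walkProdWeight w γ₂ := by
  unfold walkProdWeight
  rw [SimpleGraph.Walk.edges_append, List.map_append, List.prod_append]

/-- Key subadditivity when distances add up exactly. -/
lemma piFun_subadd [Fintype V] (hG : G.Connected) (hw : ∀ e ∈ G.edgeSet, 0 ≤ w e)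
    {u q r : V} (huq : u ≠ q) (hqr : q ≠ r) (hur : u ≠ r)
    (hd : G.dist u r = G.dist u q + G.dist q r) :
    piFun G w u r ≤ piFun G w u q + piFun G w q r := by
  have h1 : piFun G w u q ∈ piSet G w u q := by
    rw [piFun_eq, if_neg huq]
    exact (piSet_nonempty hG u q).csInf_mem (piSet_finite u q)
  have h2 : piFun G w q r ∈ piSet G w q r := by
    rw [piFun_eq, if_neg hqr]
    exact (piSet_nonempty hG q r).csInf_mem (piSet_finite q r)
  obtain ⟨γ₁, hp1, hl1, he1⟩ := h1
  obtain ⟨γ₂, hp2, hl2, he2⟩ := h2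
  set p₁ := walkProdWeight w γ₁ with hP1
  set p₂ := walkProdWeight w γ₂ with hP2
  have hp1n : 0 ≤ p₁ := prodWeight_nonneg hw γ₁
  have hp2n : 0 ≤ p₂ := prodWeight_nonneg hw γ₂
  -- the concatenation is a shortest walk, hence a path
  have hlen : (γ₁.append γ₂).length = G.dist u r := by
    rw [SimpleGraph.Walk.length_append, hl1, hl2, hd]
  have hpath : (γ₁.append γ₂).IsPath :=
    (γ₁.append γ₂).isPath_of_length_eq_dist hlen
  have hmem : walkProdWeight w (γ₁.append γ₂) / (walkProdWeight w (γ₁.append γ₂) + 1)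
      ∈ piSet G w u r := ⟨γ₁.append γ₂, hpath, hlen, rfl⟩
  have hle : piFun G w u r ≤
      walkProdWeight w (γ₁.append γ₂) / (walkProdWeight w (γ₁.append γ₂) + 1) := by
    rw [piFun_eq, if_neg hur]
    exact csInf_le (piSet_bddBelow hw u r) hmem
  rw [walkProdWeight_append, ← hP1, ← hP2] at hle
  refine hle.trans ?_
  rw [he1, he2]
  rw [div_add_div _ _ (by linarith) (by linarith),
    div_le_div_iff₀ (by positivity) (by positivity)]
  nlinarith [mul_nonneg hp1n hp2n, mul_nonneg (mul_nonneg hp1n hp2n) hp1n,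
    mul_nonneg (mul_nonneg (mul_nonneg hp1n hp2n) hp1n) hp2n]

end Aux

theorem shortest_path_distance_plus_pi_is_metric {V : Type*} [Fintype V]
    (G : SimpleGraph V) (hG : G.Connected) (w : Sym2 V → ℝ)
    (hw : ∀ e ∈ G.edgeSet, 0 ≤ w e) :
    IsMetric (fun u v => (G.dist u v : ℝ) + piFun G w u v) := by
  have hpin : ∀ u v, 0 ≤ piFun G w u v := piFun_nonneg hG hw
  have hpiself : ∀ u : V, piFun G w u u = 0 := fun u => by simp [piFun]
  refine ⟨?_, ?_, ?_, ?_⟩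
  · intro p q
    dsimp only
    have : (0 : ℝ) ≤ G.dist p q := Nat.cast_nonneg _
    linarith [hpin p q]
  · intro p q
    dsimp only
    constructor
    · intro h
      by_contra hne
      have hd : 0 < G.dist p q := hG.pos_dist_of_ne hne
      have : (1 : ℝ) ≤ G.dist p q := by exact_mod_cast hd
      linarith [hpin p q]
    · rintro rfl
      simp [hpiself, SimpleGraph.dist_self]
  · intro p q
    simp only [SimpleGraph.dist_comm, piFun_comm]
  · intro p q r
    by_cases hpr : p = r
    · subst hpr
      simp only [SimpleGraph.dist_self, hpiself, Nat.cast_zero, add_zero, zero_add]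
      have h1 : (0 : ℝ) ≤ G.dist p q := Nat.cast_nonneg _
      have h2 : (0 : ℝ) ≤ G.dist q p := Nat.cast_nonneg _
      linarith [hpin p q, hpin q p]
    by_cases hpq : p = q
    · subst hpq; simp [hpiself, SimpleGraph.dist_self]
    by_cases hqr : q = r
    · subst hqr; simp [hpiself, SimpleGraph.dist_self]
    dsimp only
    have htri : G.dist p r ≤ G.dist p q + G.dist q r := hG.dist_triangle
    rcases lt_or_eq_of_le htri with hlt | heq
    · have h1 : G.dist p r + 1 ≤ G.dist p q + G.dist q r := hlt
      have h1' : (G.dist p r : ℝ) + 1 ≤ (G.dist p q : ℝ) + (G.dist q r : ℝ) := by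
        exact_mod_cast h1
      have h2 : piFun G w p r < 1 := piFun_lt_one hG hw hpr
      linarith [hpin p q, hpin q r]
    · have := piFun_subadd hG hw hpq hqr hpr heq
      have heq' : (G.dist p r : ℝ) = (G.dist p q : ℝ) + (G.dist q r : ℝ) := by
        exact_mod_cast heq
      linarith
end
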